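/- arXiv:2101.07838 — 2 statements merged into one kernel-verified Lean document; each statement's English description precedes it below -/
import Mathlib

section
/- Let G be a finite group such that G/Z(G) is a non-abelian simple group. Then the only CD-subgroups of G are G itself and the center Z(G), and μ(G) = |G:Z(G)|. -/
/-!
Chermak–Delgado theory: `m(G,H)` is minimal exactly when `|H| * |C_G(H)|` is maximal, and the
inequality `|M| |N| |C(M)| |C(N)| ≤ |M ⊓ N| |M ⊔ N| |C(M ⊓ N)| |C(M ⊔ N)|` (from
`|M N| |M ⊓ N| = |M| |N|`) shows that CD-subgroups are closed under joins, with `M N = M ⊔ N`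
for CD-subgroups `M`, `N`. They also contain `Z(G)` and are permuted by conjugation.

A maximal CD-subgroup `T` is therefore normal (it contains its join with any conjugate), so by
simplicity of `G/Z(G)` either `T = Z(G)` or `T = G`; since `m(G,G) = m(G,Z(G)) = |G:Z(G)|`, both
`G` and `Z(G)` are CD-subgroups. Given any proper CD-subgroup, a maximal proper CD-subgroup `T`
above it is normal as well, because `T ⊔ T^g = T T^g` is proper: a group is never the product of a
proper subgroup and one of its conjugates. Hence `T = Z(G)`, which squeezes the given subgroup to
`Z(G)`.
-/

open Pointwise

/-- The Chermak–Delgado index-measure of a subgroup `H` of `G`: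
`m(G,H) = |G:H| * |G:C_G(H)|`. -/
noncomputable def cdMeasure {G : Type*} [Group G] (H : Subgroup G) : ℕ :=
  H.index * (Subgroup.centralizer (H : Set G)).index

/-- `μ(G)`, the minimum of `m(G,H)` over all subgroups `H ≤ G`. -/
noncomputable def cdMu (G : Type*) [Group G] : ℕ :=
  sInf {n : ℕ | ∃ H : Subgroup G, cdMeasure H = n}

/-- A subgroup `H ≤ G` is a CD-subgroup if `m(G,H) = μ(G)`. -/
def IsCDSubgroup {G : Type*} [Group G] (H : Subgroup G) : Prop :=
  cdMeasure H = cdMu G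

open Subgroup MulAction

namespace Subgroup

variable {G : Type*} [Group G]

theorem card_mul_mul_card_inf (M N : Subgroup G) :
    Nat.card (M * N : Set G) * Nat.card ↥(M ⊓ N) = Nat.card M * Nat.card N := by
  -- `M N / N` is the `M`-orbit of the trivial coset in `G ⧸ N`, with stabilizer `M ⊓ N`.
  have hsmul (m : M) : m • ((1 : G) : G ⧸ N) = ((m : G) : G ⧸ N) := congrArg _ (mul_one (m : G))
  have horbit : orbit M ((1 : G) : G ⧸ N) = (M : Set G).image (↑) := by
    ext x
    simp [mem_orbit_iff, hsmul]
  have hstab : stabilizer M ((1 : G) : G ⧸ N) = N.subgroupOf M := by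
    ext
    simp [hsmul, QuotientGroup.eq, mem_subgroupOf]
  have hcard : Nat.card (N.subgroupOf M) = Nat.card ↥(M ⊓ N) := by
    rw [← inf_subgroupOf_right, inf_comm]
    exact Nat.card_congr (subgroupOfEquivOfLe inf_le_left).toEquiv
  rw [card_mul_eq_card_subgroup_mul_card_quotient, ← horbit, ← hcard, ← hstab, mul_assoc,
    ← Nat.card_prod, Nat.card_congr (orbitProdStabilizerEquivGroup M _), mul_comm]

theorem coe_mul_coe_subset_sup (M N : Subgroup G) : (M * N : Set G) ⊆ ↑(M ⊔ N) :=
  Set.mul_subset_iff.2 fun _ ha _ hb => mul_mem (mem_sup_left ha) (mem_sup_right hb)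

theorem centralizer_sup (M N : Subgroup G) :
    centralizer (↑(M ⊔ N) : Set G) = centralizer (M : Set G) ⊓ centralizer (N : Set G) := by
  refine le_antisymm (le_inf (centralizer_le (SetLike.coe_subset_coe.2 le_sup_left))
    (centralizer_le (SetLike.coe_subset_coe.2 le_sup_right))) ?_
  rw [← le_centralizer_iff]
  exact sup_le (le_centralizer_iff.1 inf_le_left) (le_centralizer_iff.1 inf_le_right)

theorem centralizer_map_mulEquiv {G' : Type*} [Group G'] (e : G ≃* G') (H : Subgroup G) :
    centralizer (H.map (e : G →* G') : Set G') = (centralizer (H : Set G)).map (e : G →* G') := by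
  ext x
  obtain ⟨y, rfl⟩ := e.surjective x
  simp [mem_centralizer_iff, ← map_mul]

theorem eq_top_of_coe_mul_map_conj_eq_univ {H : Subgroup G} {g : G}
    (h : (H : Set G) * ((H.map (MulAut.conj g) : Subgroup G) : Set G) = Set.univ) : H = ⊤ := by
  have hmem (x : G) : ∃ a ∈ H, ∃ c ∈ H, a * (g * c * g⁻¹) = x := by
    obtain ⟨a, ha, _, ⟨c, hc, rfl⟩, hx⟩ := h.symm ▸ Set.mem_univ x
    exact ⟨a, ha, c, hc, hx⟩
  have hg : g ∈ H := by
    obtain ⟨a, ha, c, hc, hac⟩ := hmem g⁻¹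
    rw [show g = a⁻¹ * (a * (g * c * g⁻¹)) * g * c⁻¹ by group, hac, inv_mul_cancel_right]
    exact mul_mem (inv_mem ha) (inv_mem hc)
  refine eq_top_iff' H |>.2 fun x => ?_
  obtain ⟨a, ha, c, hc, rfl⟩ := hmem x
  exact mul_mem ha (mul_mem (mul_mem hg hc) (inv_mem hg))

theorem normal_of_maximal_of_sup_map_conj {P : Subgroup G → Prop} {H : Subgroup G}
    (hH : Maximal P H) (hP : ∀ g : G, P (H ⊔ H.map (MulAut.conj g))) : H.Normal :=
  ⟨fun n hn g => hH.2 (hP g) le_sup_left (mem_sup_right ⟨n, hn, rfl⟩)⟩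

theorem eq_or_eq_top_of_le_of_normal {N T : Subgroup G} [N.Normal] [IsSimpleGroup (G ⧸ N)]
    (hNT : N ≤ T) (hT : T.Normal) : T = N ∨ T = ⊤ := by
  rcases (hT.map _ (QuotientGroup.mk'_surjective N)).eq_bot_or_eq_top with hbot | htop
  · rw [map_eq_bot_iff, QuotientGroup.ker_mk'] at hbot
    exact Or.inl (le_antisymm hbot hNT)
  · have := comap_map_eq (QuotientGroup.mk' N) T
    rw [htop, comap_top, QuotientGroup.ker_mk', sup_of_le_left hNT] at this
    exact Or.inr this.symm

section Finite

variable [Finite G]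

theorem card_coe_mul_le_card_sup (M N : Subgroup G) :
    Nat.card (M * N : Set G) ≤ Nat.card ↥(M ⊔ N) :=
  Nat.card_mono (Set.toFinite _) (coe_mul_coe_subset_sup M N)

theorem card_coe_mul_lt_card_sup {M N : Subgroup G} (h : (M * N : Set G) ≠ ↑(M ⊔ N)) :
    Nat.card (M * N : Set G) < Nat.card ↥(M ⊔ N) := by
  rw [Nat.card_coe_set_eq, ← SetLike.coe_sort_coe, Nat.card_coe_set_eq]
  exact Set.ncard_lt_ncard (ssubset_of_subset_of_ne (coe_mul_coe_subset_sup M N) h)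

theorem card_centralizer_mul_le_card_centralizer_inf (M N : Subgroup G) :
    Nat.card ((centralizer (M : Set G) : Set G) * (centralizer (N : Set G) : Set G)) ≤
      Nat.card (centralizer (↑(M ⊓ N) : Set G)) :=
  Nat.card_mono (Set.toFinite _) <| Set.mul_subset_iff.2 fun _ ha _ hb =>
    mul_mem (centralizer_le (SetLike.coe_subset_coe.2 inf_le_left) ha)
      (centralizer_le (SetLike.coe_subset_coe.2 inf_le_right) hb)

end Finite

end Subgroup

section ChermakDelgado

variable {G : Type*} [Group G]

theorem cdMeasure_top : cdMeasure (⊤ : Subgroup G) = (center G).index := by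
  rw [cdMeasure, index_top, coe_top, centralizer_univ, one_mul]

theorem cdMeasure_center : cdMeasure (center G) = (center G).index := by
  rw [cdMeasure, centralizer_center, index_top, mul_one]

theorem cdMeasure_map_mulEquiv (e : G ≃* G) (H : Subgroup G) :
    cdMeasure (H.map (e : G →* G)) = cdMeasure H := by
  rw [cdMeasure, cdMeasure, centralizer_map_mulEquiv, index_map_equiv, index_map_equiv]

theorem isCDSubgroup_iff_forall_le {H : Subgroup G} :
    IsCDSubgroup H ↔ ∀ K : Subgroup G, cdMeasure H ≤ cdMeasure K := by
  refine ⟨fun hH K => hH ▸ Nat.sInf_le ⟨K, rfl⟩, fun hH => le_antisymm ?_ (Nat.sInf_le ⟨H, rfl⟩)⟩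
  refine le_csInf ⟨_, H, rfl⟩ ?_
  rintro _ ⟨K, rfl⟩
  exact hH K

variable (G) in
theorem exists_isCDSubgroup : ∃ H : Subgroup G, IsCDSubgroup H :=
  Nat.sInf_mem (s := {n | ∃ H : Subgroup G, cdMeasure H = n}) ⟨_, ⊤, rfl⟩

theorem isCDSubgroup_top_iff : IsCDSubgroup (⊤ : Subgroup G) ↔ IsCDSubgroup (center G) := by
  rw [IsCDSubgroup, IsCDSubgroup, cdMeasure_top, cdMeasure_center]

theorem IsCDSubgroup.map_mulEquiv {H : Subgroup G} (hH : IsCDSubgroup H) (e : G ≃* G) :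
    IsCDSubgroup (H.map (e : G →* G)) := by
  rwa [IsCDSubgroup, cdMeasure_map_mulEquiv]

noncomputable def cdProduct (H : Subgroup G) : ℕ :=
  Nat.card H * Nat.card (centralizer (H : Set G))

theorem cdMeasure_mul_cdProduct (H : Subgroup G) :
    cdMeasure H * cdProduct H = Nat.card G * Nat.card G := by
  rw [cdMeasure, cdProduct, mul_mul_mul_comm, index_mul_card, index_mul_card]

theorem cdProduct_mul_cdProduct (M N : Subgroup G) :
    cdProduct M * cdProduct N =
      Nat.card (M * N : Set G) *
        Nat.card ((centralizer (M : Set G) : Set G) * (centralizer (N : Set G) : Set G)) *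
        (Nat.card ↥(M ⊓ N) * Nat.card (centralizer (↑(M ⊔ N) : Set G))) := by
  have hM := card_mul_mul_card_inf M N
  have hC := card_mul_mul_card_inf (centralizer (M : Set G)) (centralizer (N : Set G))
  rw [centralizer_sup, cdProduct, cdProduct]
  calc _ = Nat.card M * Nat.card N *
        (Nat.card (centralizer (M : Set G)) * Nat.card (centralizer (N : Set G))) := by ring
    _ = _ := by rw [← hM, ← hC]; ring

variable [Finite G]

theorem cdProduct_mul_cdProduct_le (M N : Subgroup G) :
    cdProduct M * cdProduct N ≤ cdProduct (M ⊓ N) * cdProduct (M ⊔ N) := by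
  rw [cdProduct_mul_cdProduct, cdProduct, cdProduct]
  calc _ ≤ Nat.card ↥(M ⊔ N) * Nat.card (centralizer (↑(M ⊓ N) : Set G)) *
        (Nat.card ↥(M ⊓ N) * Nat.card (centralizer (↑(M ⊔ N) : Set G))) := by
        gcongr
        · exact card_coe_mul_le_card_sup M N
        · exact card_centralizer_mul_le_card_centralizer_inf M N
    _ = _ := by ring

theorem cdProduct_mul_cdProduct_lt {M N : Subgroup G} (h : (M * N : Set G) ≠ ↑(M ⊔ N)) :
    cdProduct M * cdProduct N < cdProduct (M ⊓ N) * cdProduct (M ⊔ N) := by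
  rw [cdProduct_mul_cdProduct, cdProduct, cdProduct]
  calc _ < Nat.card ↥(M ⊔ N) * Nat.card (centralizer (↑(M ⊓ N) : Set G)) *
        (Nat.card ↥(M ⊓ N) * Nat.card (centralizer (↑(M ⊔ N) : Set G))) := by
        refine Nat.mul_lt_mul_of_pos_right ?_ (Nat.mul_pos Nat.card_pos Nat.card_pos)
        exact Nat.mul_lt_mul_of_lt_of_le (card_coe_mul_lt_card_sup h)
          (card_centralizer_mul_le_card_centralizer_inf M N) Nat.card_pos
    _ = _ := by ring

theorem cdProduct_pos (H : Subgroup G) : 0 < cdProduct H :=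
  Nat.mul_pos Nat.card_pos Nat.card_pos

theorem cdMeasure_pos (H : Subgroup G) : 0 < cdMeasure H :=
  Nat.mul_pos (Nat.pos_of_ne_zero index_ne_zero_of_finite)
    (Nat.pos_of_ne_zero index_ne_zero_of_finite)

theorem cdMeasure_le_cdMeasure_iff {M N : Subgroup G} :
    cdMeasure M ≤ cdMeasure N ↔ cdProduct N ≤ cdProduct M := by
  have h := (cdMeasure_mul_cdProduct M).trans (cdMeasure_mul_cdProduct N).symm
  have := cdMeasure_pos M
  have := cdMeasure_pos N
  have := cdProduct_pos M
  have := cdProduct_pos N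
  constructor <;> intro h <;> nlinarith

theorem isCDSubgroup_iff_forall_cdProduct_le {H : Subgroup G} :
    IsCDSubgroup H ↔ ∀ K : Subgroup G, cdProduct K ≤ cdProduct H := by
  simp only [isCDSubgroup_iff_forall_le, cdMeasure_le_cdMeasure_iff]

theorem IsCDSubgroup.cdProduct_inf_mul_cdProduct_sup {M N : Subgroup G} (hM : IsCDSubgroup M)
    (hN : IsCDSubgroup N) : cdProduct (M ⊓ N) * cdProduct (M ⊔ N) = cdProduct M * cdProduct N := by
  rw [isCDSubgroup_iff_forall_cdProduct_le] at hM hN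
  exact le_antisymm (Nat.mul_le_mul (hM _) (hN _)) (cdProduct_mul_cdProduct_le M N)

theorem IsCDSubgroup.sup {M N : Subgroup G} (hM : IsCDSubgroup M) (hN : IsCDSubgroup N) :
    IsCDSubgroup (M ⊔ N) := by
  have h := hM.cdProduct_inf_mul_cdProduct_sup hN
  rw [isCDSubgroup_iff_forall_cdProduct_le] at hM hN ⊢
  refine fun K => (hN K).trans (Nat.le_of_mul_le_mul_left ?_ (cdProduct_pos M))
  calc cdProduct M * cdProduct N = cdProduct (M ⊓ N) * cdProduct (M ⊔ N) := h.symm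
    _ ≤ cdProduct M * cdProduct (M ⊔ N) := Nat.mul_le_mul_right _ (hM _)

theorem IsCDSubgroup.coe_mul_eq_sup {M N : Subgroup G} (hM : IsCDSubgroup M)
    (hN : IsCDSubgroup N) : (M * N : Set G) = ↑(M ⊔ N) := by
  by_contra h
  exact (cdProduct_mul_cdProduct_lt h).ne (hM.cdProduct_inf_mul_cdProduct_sup hN).symm

theorem IsCDSubgroup.center_le {H : Subgroup G} (hH : IsCDSubgroup H) : center G ≤ H := by
  have hle := isCDSubgroup_iff_forall_cdProduct_le.1 hH (H ⊔ center G)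
  rw [cdProduct, cdProduct, centralizer_sup, centralizer_center, inf_top_eq] at hle
  exact sup_eq_left.1
    (eq_of_le_of_card_ge le_sup_left (Nat.le_of_mul_le_mul_right hle Nat.card_pos)).symm

theorem isCDSubgroup_iff_eq_top_or_eq_center
    (hZ : ∀ T : Subgroup G, T.Normal → center G ≤ T → T = center G ∨ T = ⊤) {H : Subgroup G} :
    IsCDSubgroup H ↔ H = ⊤ ∨ H = center G := by
  have htop : IsCDSubgroup (⊤ : Subgroup G) := by
    obtain ⟨H₀, hH₀⟩ := exists_isCDSubgroup G
    obtain ⟨T, -, hT⟩ := Finite.exists_le_maximal hH₀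
    have hTn : T.Normal :=
      normal_of_maximal_of_sup_map_conj hT fun g => hT.1.sup (hT.1.map_mulEquiv _)
    rcases hZ T hTn hT.1.center_le with rfl | rfl
    · exact isCDSubgroup_top_iff.2 hT.1
    · exact hT.1
  refine ⟨fun hH => or_iff_not_imp_left.2 fun hH_top => ?_, ?_⟩
  · obtain ⟨T, hHT, hT⟩ :=
      Finite.exists_le_maximal (p := fun K : Subgroup G => IsCDSubgroup K ∧ K ≠ ⊤) ⟨hH, hH_top⟩
    obtain ⟨hT_cd, hT_top⟩ := hT.1
    have hTn : T.Normal := by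
      refine normal_of_maximal_of_sup_map_conj hT fun g => ⟨hT_cd.sup (hT_cd.map_mulEquiv _), ?_⟩
      intro h
      refine hT_top (eq_top_of_coe_mul_map_conj_eq_univ (g := g) ?_)
      rw [hT_cd.coe_mul_eq_sup (hT_cd.map_mulEquiv _), h, coe_top]
    have hTZ : T = center G := (hZ T hTn hT_cd.center_le).resolve_right hT_top
    exact le_antisymm (hTZ ▸ hHT) hH.center_le
  · rintro (rfl | rfl)
    · exact htop
    · exact isCDSubgroup_top_iff.1 htop

end ChermakDelgado

theorem stmt_8_general {G : Type*} [Group G] [Finite G]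
    (hsimple : IsSimpleGroup (G ⧸ Subgroup.center G)) :
    (∀ H : Subgroup G, IsCDSubgroup H ↔ H = ⊤ ∨ H = Subgroup.center G) ∧
      cdMu G = (Subgroup.center G).index := by
  have hCD (H : Subgroup G) : IsCDSubgroup H ↔ H = ⊤ ∨ H = center G :=
    isCDSubgroup_iff_eq_top_or_eq_center fun _ hT hZT => eq_or_eq_top_of_le_of_normal hZT hT
  refine ⟨hCD, ?_⟩
  rw [← cdMeasure_top]
  exact ((hCD ⊤).2 (Or.inl rfl)).symm

theorem stmt_8 {G : Type*} [Group G] [Finite G]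
    (hsimple : IsSimpleGroup (G ⧸ Subgroup.center G))
    (hnonab : ¬ ∀ a b : G ⧸ Subgroup.center G, a * b = b * a) :
    (∀ H : Subgroup G, IsCDSubgroup H ↔ H = ⊤ ∨ H = Subgroup.center G) ∧
      cdMu G = (Subgroup.center G).index :=
  stmt_8_general hsimple
end

section
/- Let G be a finite group and N a normal subgroup of G. Then for any subgroup H ≤ N, one has μ(N) ≤ m(N,H) ≤ m(G,H)/|G:N|; in particular, if H is a CD-subgroup of G contained in N, then μ(N) ≤ μ(G)/|G:N|. -/
open Pointwise

/-! Restricting `H ≤ N` to `N` divides `|G:H|` by exactly `|G:N|` while `|G:C_G(H)|` can only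
shrink, because `C_N(H) = C_G(H) ∩ N` and `|N : C_G(H) ∩ N| ≤ |G : C_G(H)|`. -/

lemma Subgroup.centralizer_subgroupOf {G : Type*} [Group G] {H N : Subgroup G} (hHN : H ≤ N) :
    Subgroup.centralizer ((H.subgroupOf N : Subgroup N) : Set N)
      = (Subgroup.centralizer (H : Set G)).subgroupOf N := by
  ext n
  simp only [Subgroup.mem_centralizer_iff, Subgroup.mem_subgroupOf, SetLike.mem_coe]
  constructor
  · intro h g hg
    exact congrArg Subtype.val (h ⟨g, hHN hg⟩ hg)
  · intro h m hm
    exact Subtype.ext (h m hm)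

lemma cdMu_le_cdMeasure {G : Type*} [Group G] (H : Subgroup G) : cdMu G ≤ cdMeasure H :=
  Nat.sInf_le ⟨H, rfl⟩

lemma cdMeasure_subgroupOf_mul_index_le {G : Type*} [Group G] {H N : Subgroup G} (hHN : H ≤ N)
    [(Subgroup.centralizer (H : Set G)).FiniteIndex] :
    cdMeasure (H.subgroupOf N) * N.index ≤ cdMeasure H := by
  set C := Subgroup.centralizer (H : Set G)
  have hC : C.relIndex N ≤ C.index := by
    simpa only [Subgroup.relIndex_top_right] using
      Subgroup.relIndex_le_of_le_right (H := C) le_top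
        (by rw [Subgroup.relIndex_top_right]; exact Subgroup.FiniteIndex.index_ne_zero)
  calc cdMeasure (H.subgroupOf N) * N.index
      = H.relIndex N * N.index * C.relIndex N := by
        rw [cdMeasure, Subgroup.centralizer_subgroupOf hHN]; unfold Subgroup.relIndex; ring
    _ = H.index * C.relIndex N := by rw [Subgroup.relIndex_mul_index hHN]
    _ ≤ H.index * C.index := Nat.mul_le_mul_left _ hC

theorem stmt_18_general {G : Type*} [Group G] [Finite G] (N : Subgroup G)
    (H : Subgroup G) (hHN : H ≤ N) :
    cdMu N ≤ cdMeasure (H.subgroupOf N) ∧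
      cdMeasure (H.subgroupOf N) ≤ cdMeasure H / N.index ∧
      (IsCDSubgroup H → cdMu N ≤ cdMu G / N.index) := by
  have hle : cdMeasure (H.subgroupOf N) ≤ cdMeasure H / N.index :=
    (Nat.le_div_iff_mul_le (Nat.pos_of_ne_zero Subgroup.index_ne_zero_of_finite)).mpr
      (cdMeasure_subgroupOf_mul_index_le hHN)
  refine ⟨cdMu_le_cdMeasure _, hle, fun hCD => ?_⟩
  calc cdMu N ≤ cdMeasure (H.subgroupOf N) := cdMu_le_cdMeasure _
    _ ≤ cdMeasure H / N.index := hle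
    _ = cdMu G / N.index := by rw [hCD]

theorem stmt_18 {G : Type*} [Group G] [Finite G] (N : Subgroup G) (hN : N.Normal)
    (H : Subgroup G) (hHN : H ≤ N) :
    cdMu N ≤ cdMeasure (H.subgroupOf N) ∧
      cdMeasure (H.subgroupOf N) ≤ cdMeasure H / N.index ∧
      (IsCDSubgroup H → cdMu N ≤ cdMu G / N.index) :=
  stmt_18_general N H hHN
end
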